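/- Let G be a finite directed acyclic simple graph and let H_1, H_2 ⊆ G be maximal rooted subgraphs with roots v_1 and v_2 respectively. If there is a graph isomorphism between H_1 and H_2 mapping v_1 to v_2 such that every pair of corresponding vertices has the same in-degree in G, then P(v_1) = P(v_2), where P(v) is the probability that v is visited by the backward random walk on G. -/

import Mathlib

open scoped Classical

/-- In-degree of `v` in `G`. -/
noncomputable def indeg {V : Type} [Fintype V] (adj : V → V → Prop) (v : V) : ℕ :=
  (Finset.univ.filter (fun u => adj u v)).card

/-- The set of vertices reachable from `v` (vertex set of the maximal rooted
subgraph with root `v`). -/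
def reach {V : Type} (adj : V → V → Prop) (v : V) : Set V :=
  {u | Relation.ReflTransGen adj v u}

/-- A complete backward walk. -/
def IsMaxBWalk {V : Type} (adj : V → V → Prop) (w : List V) : Prop :=
  w ≠ [] ∧ w.Chain' (fun a b => adj b a) ∧ ∀ l ∈ w.getLast?, ∀ u, ¬ adj u l

/-- The probability of a given complete backward walk. -/
noncomputable def walkProb {V : Type} [Fintype V] (adj : V → V → Prop) (w : List V) : ℝ :=
  (Fintype.card V : ℝ)⁻¹ * ((w.zip w.tail).map (fun p => ((indeg adj p.1 : ℝ))⁻¹)).prod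

/-- `P v`: the probability that vertex `v` is visited by the backward random walk. -/
noncomputable def visitProb {V : Type} [Fintype V] (adj : V → V → Prop) (v : V) : ℝ :=
  ∑' w : List V, if IsMaxBWalk adj w ∧ v ∈ w then walkProb adj w else 0

/-!
In an acyclic graph a backward walk visits each vertex at most once, so a complete walk through `v`
splits uniquely as `s ++ w`, where `s ++ [v]` is a walk ending at `v` and `w` is a complete walk
starting at `v`. Its weight factors accordingly, and the complete walks from `v` have total weight
`1` (well-founded induction along in-edges), so `P v` is `1 / |V|` times the total weight of the
segments `s`. Such a segment stays inside the maximal rooted subgraph of `v` and its weight only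
involves in-degrees of its vertices, so a degree-preserving rooted isomorphism maps the segments
at `v₁` bijectively onto those at `v₂`, preserving weights.
-/

open Finset Relation

section ListLemmas

variable {α : Type*}

theorem List.IsChain.nodup_of_acyclic {r : α → α → Prop} (hr : ∀ x, ¬ TransGen r x x)
    {l : List α} (hl : l.IsChain r) : l.Nodup := by
  have : IsTrans α (TransGen r) := ⟨fun _ _ _ => TransGen.trans⟩
  refine (List.isChain_iff_pairwise.1 (hl.imp fun _ _ => TransGen.single)).imp ?_
  rintro a _ h rfl
  exact hr a h

variable {v : α} {s : List α}

theorem List.not_mem_of_nodup_append_cons {t : List α} (h : (s ++ v :: t).Nodup) : v ∉ s :=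
  fun hv => (List.nodup_cons.1 (List.nodup_middle.1 h)).1 (List.mem_append_left _ hv)

variable [DecidableEq α]

theorem List.takeWhile_ne_append_cons (hv : v ∉ s) (t : List α) :
    (s ++ v :: t).takeWhile (fun x => decide (x ≠ v)) = s := by
  rw [List.takeWhile_append_of_pos fun x hx => decide_eq_true (ne_of_mem_of_not_mem hx hv)]
  simp

theorem List.dropWhile_ne_append_cons (hv : v ∉ s) (t : List α) :
    (s ++ v :: t).dropWhile (fun x => decide (x ≠ v)) = v :: t := by
  rw [List.dropWhile_append_of_pos fun x hx => decide_eq_true (ne_of_mem_of_not_mem hx hv)]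
  simp

end ListLemmas

theorem WellFounded.of_finite_of_acyclic {α : Type*} [Finite α] {r : α → α → Prop}
    (hr : ∀ x, ¬ TransGen r x x) : WellFounded r :=
  have : IsTrans α (TransGen r) := ⟨fun _ _ _ => TransGen.trans⟩
  have : Std.Irrefl (TransGen r) := ⟨hr⟩
  Subrelation.wf TransGen.single (Finite.wellFounded_of_trans_of_irrefl _)

theorem Equiv.extendSubtype_symm_extendSubtype_apply {α : Type*} {p q : α → Prop}
    [DecidablePred p] [DecidablePred q] [Finite {x | p x}] [Finite {x | q x}]
    (e : {x // p x} ≃ {x // q x}) {x : α} (hx : p x) :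
    e.symm.extendSubtype (e.extendSubtype x) = x := by
  rw [e.extendSubtype_apply_of_mem x hx, e.symm.extendSubtype_apply_of_mem _ (e ⟨x, hx⟩).2]
  simp

namespace BackwardWalk

section Walks

variable {V : Type} {adj : V → V → Prop}

lemma nodup_of_isChain (hacyc : ∀ x : V, ¬ TransGen adj x x) {l : List V}
    (hl : l.IsChain fun a b => adj b a) : l.Nodup :=
  hl.nodup_of_acyclic fun x h => hacyc x (transGen_swap.1 h)

lemma isMaxBWalk_iff {w : List V} : IsMaxBWalk adj w ↔
    w ≠ [] ∧ w.IsChain (fun a b => adj b a) ∧ ∀ l ∈ w.getLast?, ∀ u, ¬ adj u l :=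
  Iff.rfl

lemma isMaxBWalk_singleton {v : V} : IsMaxBWalk adj [v] ↔ ∀ u, ¬ adj u v := by
  simp [isMaxBWalk_iff]

lemma isMaxBWalk_cons_cons {a b : V} {t : List V} :
    IsMaxBWalk adj (a :: b :: t) ↔ adj b a ∧ IsMaxBWalk adj (b :: t) := by
  simp [isMaxBWalk_iff, and_assoc]

lemma isMaxBWalk_append_cons {s t : List V} {v : V} :
    IsMaxBWalk adj (s ++ v :: t) ↔
      (s ++ [v]).IsChain (fun a b => adj b a) ∧ IsMaxBWalk adj (v :: t) := by
  rw [isMaxBWalk_iff, isMaxBWalk_iff, List.isChain_split, List.getLast?_append_cons]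
  simp only [ne_eq, List.append_eq_nil_iff, reduceCtorEq, and_false, not_false_eq_true,
    true_and, and_assoc]

lemma mem_reach_of_isChain {s : List V} {v : V} (hs : (s ++ [v]).IsChain fun a b => adj b a) :
    ∀ x ∈ s ++ [v], x ∈ reach adj v :=
  hs.backwards_induction (· ∈ reach adj v) _ (fun _ _ hxy hy => ReflTransGen.tail hy hxy)
    (fun _ => by simp [reach, ReflTransGen.refl])

end Walks

section Sums

variable {V : Type} [Fintype V] (adj : V → V → Prop)

noncomputable def indegWeight (l : List V) : ℝ :=
  (l.map fun x => ((indeg adj x : ℝ))⁻¹).prod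

lemma indegWeight_cons (x : V) (l : List V) :
    indegWeight adj (x :: l) = (indeg adj x : ℝ)⁻¹ * indegWeight adj l :=
  List.prod_cons

lemma indegWeight_append (l₁ l₂ : List V) :
    indegWeight adj (l₁ ++ l₂) = indegWeight adj l₁ * indegWeight adj l₂ := by
  simp [indegWeight]

lemma indegWeight_map {f : V → V} {l : List V} (h : ∀ x ∈ l, indeg adj (f x) = indeg adj x) :
    indegWeight adj (l.map f) = indegWeight adj l := by
  simp only [indegWeight, List.map_map]
  exact congrArg _ (List.map_congr_left fun x hx => by simp [h x hx])

lemma walkProb_eq (w : List V) :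
    walkProb adj w = (Fintype.card V : ℝ)⁻¹ * indegWeight adj w.dropLast := by
  suffices ∀ w : List V, (w.zip w.tail).map (fun p => ((indeg adj p.1 : ℝ))⁻¹) =
      w.dropLast.map fun x => ((indeg adj x : ℝ))⁻¹ by
    rw [walkProb, this]; rfl
  intro l
  induction l with
  | nil => rfl
  | cons a t ih =>
    cases t with
    | nil => rfl
    | cons b t =>
      rw [List.tail_cons] at ih
      simp only [List.tail_cons, List.zip_cons_cons, List.map_cons, List.dropLast_cons_cons, ih]

def nodupLists (V : Type) [Fintype V] : Finset (List V) :=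
  univ.map (Function.Embedding.subtype List.Nodup)

@[simp] lemma mem_nodupLists {l : List V} : l ∈ nodupLists V ↔ l.Nodup := by
  simp [nodupLists]

/-- The part of a backward walk strictly before its visit to `v`. -/
noncomputable def walksTo (v : V) : Finset (List V) :=
  (nodupLists V).filter fun s => (s ++ [v]).IsChain fun a b => adj b a

noncomputable def completeWalksFrom (v : V) : Finset (List V) :=
  (nodupLists V).filter fun w => IsMaxBWalk adj w ∧ w.head? = some v

noncomputable def completeWalksThrough (v : V) : Finset (List V) :=
  (nodupLists V).filter fun w => IsMaxBWalk adj w ∧ v ∈ w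

variable {adj} {v : V}

lemma mem_walksTo (hacyc : ∀ x : V, ¬ TransGen adj x x) {s : List V} :
    s ∈ walksTo adj v ↔ (s ++ [v]).IsChain fun a b => adj b a := by
  simp only [walksTo, mem_filter, mem_nodupLists, and_iff_right_iff_imp]
  exact fun h => (nodup_of_isChain hacyc h).sublist (List.sublist_append_left _ _)

lemma mem_completeWalksFrom (hacyc : ∀ x : V, ¬ TransGen adj x x) {w : List V} :
    w ∈ completeWalksFrom adj v ↔ IsMaxBWalk adj w ∧ w.head? = some v := by
  simp only [completeWalksFrom, mem_filter, mem_nodupLists, and_iff_right_iff_imp]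
  exact fun h => nodup_of_isChain hacyc (isMaxBWalk_iff.1 h.1).2.1

lemma mem_completeWalksThrough (hacyc : ∀ x : V, ¬ TransGen adj x x) {w : List V} :
    w ∈ completeWalksThrough adj v ↔ IsMaxBWalk adj w ∧ v ∈ w := by
  simp only [completeWalksThrough, mem_filter, mem_nodupLists, and_iff_right_iff_imp]
  exact fun h => nodup_of_isChain hacyc (isMaxBWalk_iff.1 h.1).2.1

lemma ne_nil_of_mem_completeWalksFrom {w : List V} (hw : w ∈ completeWalksFrom adj v) :
    w ≠ [] := by
  rintro rfl
  simp [completeWalksFrom] at hw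

lemma completeWalksFrom_eq_singleton (hacyc : ∀ x : V, ¬ TransGen adj x x)
    (hv : ∀ u, ¬ adj u v) : completeWalksFrom adj v = {[v]} := by
  ext w
  rw [mem_completeWalksFrom hacyc, mem_singleton]
  constructor
  · rintro ⟨hw, hhead⟩
    obtain ⟨t, rfl⟩ := List.head?_eq_some_iff.1 hhead
    cases t with
    | nil => rfl
    | cons u t => exact absurd (isMaxBWalk_cons_cons.1 hw).1 (hv u)
  · rintro rfl
    exact ⟨isMaxBWalk_singleton.2 hv, rfl⟩

lemma completeWalksFrom_eq_biUnion (hacyc : ∀ x : V, ¬ TransGen adj x x)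
    (hv : ∃ u, adj u v) : completeWalksFrom adj v = (univ.filter (adj · v)).biUnion
      fun u => (completeWalksFrom adj u).map ⟨List.cons v, List.cons_injective⟩ := by
  ext w
  simp only [mem_biUnion, mem_filter, mem_univ, true_and, mem_map, Function.Embedding.coeFn_mk,
    mem_completeWalksFrom hacyc]
  constructor
  · rintro ⟨hw, hhead⟩
    obtain ⟨t, rfl⟩ := List.head?_eq_some_iff.1 hhead
    cases t with
    | nil =>
      obtain ⟨u, hu⟩ := hv
      exact absurd hu (isMaxBWalk_singleton.1 hw u)
    | cons u t =>
      obtain ⟨hu, ht⟩ := isMaxBWalk_cons_cons.1 hw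
      exact ⟨u, hu, u :: t, ⟨ht, rfl⟩, rfl⟩
  · rintro ⟨u, hu, t, ⟨ht, hhead⟩, rfl⟩
    obtain ⟨t, rfl⟩ := List.head?_eq_some_iff.1 hhead
    exact ⟨isMaxBWalk_cons_cons.2 ⟨hu, ht⟩, rfl⟩

lemma sum_completeWalksFrom (hacyc : ∀ x : V, ¬ TransGen adj x x) (v : V) :
    ∑ w ∈ completeWalksFrom adj v, indegWeight adj w.dropLast = 1 := by
  induction v using (WellFounded.of_finite_of_acyclic hacyc).induction with
  | _ v ih =>
  by_cases hv : ∃ u, adj u v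
  · have hdisj : (univ.filter (adj · v) : Set V).PairwiseDisjoint
        fun u => (completeWalksFrom adj u).map ⟨List.cons v, List.cons_injective⟩ := by
      intro u₁ _ u₂ _ hne
      simp only [Function.onFun, disjoint_left, mem_map, Function.Embedding.coeFn_mk,
        mem_completeWalksFrom hacyc]
      rintro _ ⟨t, ⟨-, h₁⟩, rfl⟩ ⟨t', ⟨-, h₂⟩, heq⟩
      obtain rfl := List.cons_inj_right _ |>.1 heq
      exact hne (Option.some.inj (h₁.symm.trans h₂))
    have hterm : ∀ u ∈ univ.filter (adj · v),
        ∑ w ∈ (completeWalksFrom adj u).map ⟨List.cons v, List.cons_injective⟩,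
          indegWeight adj w.dropLast = (indeg adj v : ℝ)⁻¹ := by
      intro u hu
      rw [sum_map, ← mul_one (indeg adj v : ℝ)⁻¹, ← ih u (mem_filter.1 hu).2, mul_sum]
      refine sum_congr rfl fun w hw => ?_
      rw [Function.Embedding.coeFn_mk,
        List.dropLast_cons_of_ne_nil (ne_nil_of_mem_completeWalksFrom hw), indegWeight_cons]
    obtain ⟨u, hu⟩ := hv
    have hpos : 0 < indeg adj v := card_pos.2 ⟨u, by simpa using hu⟩
    rw [completeWalksFrom_eq_biUnion hacyc ⟨u, hu⟩, sum_biUnion hdisj, sum_congr rfl hterm,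
      sum_const, nsmul_eq_mul]
    exact mul_inv_cancel₀ (by exact_mod_cast hpos.ne')
  · rw [not_exists] at hv
    simp [completeWalksFrom_eq_singleton hacyc hv, indegWeight]

lemma sum_completeWalksThrough (hacyc : ∀ x : V, ¬ TransGen adj x x) (v : V) :
    ∑ w ∈ completeWalksThrough adj v, indegWeight adj w.dropLast =
      (∑ s ∈ walksTo adj v, indegWeight adj s) *
        ∑ w ∈ completeWalksFrom adj v, indegWeight adj w.dropLast := by
  rw [sum_mul_sum, ← sum_product', eq_comm]
  refine sum_nbij' (fun p => p.1 ++ p.2)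
    (fun w => (w.takeWhile (· ≠ v), w.dropWhile (· ≠ v))) ?_ ?_ ?_ ?_ ?_
  · rintro ⟨s, w⟩ h
    rw [mem_product, mem_walksTo hacyc, mem_completeWalksFrom hacyc] at h
    obtain ⟨hs, hw, hhead⟩ := h
    obtain ⟨t, rfl⟩ := List.head?_eq_some_iff.1 hhead
    exact (mem_completeWalksThrough hacyc).2 ⟨isMaxBWalk_append_cons.2 ⟨hs, hw⟩, by simp⟩
  · intro w hw
    obtain ⟨hw, hv⟩ := (mem_completeWalksThrough hacyc).1 hw
    obtain ⟨s, t, rfl⟩ := List.append_of_mem hv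
    have hvs :=
      List.not_mem_of_nodup_append_cons (nodup_of_isChain hacyc (isMaxBWalk_iff.1 hw).2.1)
    obtain ⟨hs, ht⟩ := isMaxBWalk_append_cons.1 hw
    rw [mem_product, List.takeWhile_ne_append_cons hvs, List.dropWhile_ne_append_cons hvs]
    exact ⟨(mem_walksTo hacyc).2 hs, (mem_completeWalksFrom hacyc).2 ⟨ht, rfl⟩⟩
  · rintro ⟨s, w⟩ h
    rw [mem_product, mem_walksTo hacyc, mem_completeWalksFrom hacyc] at h
    obtain ⟨hs, -, hhead⟩ := h
    obtain ⟨t, rfl⟩ := List.head?_eq_some_iff.1 hhead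
    have hvs := List.not_mem_of_nodup_append_cons (t := []) (nodup_of_isChain hacyc hs)
    exact Prod.ext (List.takeWhile_ne_append_cons hvs t) (List.dropWhile_ne_append_cons hvs t)
  · exact fun w _ => List.takeWhile_append_dropWhile
  · rintro ⟨s, w⟩ h
    rw [List.dropLast_append_of_ne_nil (ne_nil_of_mem_completeWalksFrom (mem_product.1 h).2),
      indegWeight_append]

lemma visitProb_eq_sum_walksTo (hacyc : ∀ x : V, ¬ TransGen adj x x) (v : V) :
    visitProb adj v = (Fintype.card V : ℝ)⁻¹ * ∑ s ∈ walksTo adj v, indegWeight adj s := by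
  have hfin : visitProb adj v = ∑ w ∈ completeWalksThrough adj v, walkProb adj w := by
    rw [visitProb, tsum_eq_sum fun w hw => if_neg (mt (mem_completeWalksThrough hacyc).2 hw)]
    exact sum_congr rfl fun w hw => if_pos ((mem_completeWalksThrough hacyc).1 hw)
  simp only [hfin, walkProb_eq, ← mul_sum, sum_completeWalksThrough hacyc,
    sum_completeWalksFrom hacyc, mul_one]

end Sums

section Transport

variable {V : Type} [Fintype V] {adj : V → V → Prop} {v₁ v₂ : V}

lemma map_mem_walksTo (hacyc : ∀ x : V, ¬ TransGen adj x x) (e : reach adj v₁ ≃ reach adj v₂)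
    (hadj : ∀ a b : reach adj v₁, adj a b → adj (e a) (e b))
    (hroot : (e ⟨v₁, ReflTransGen.refl⟩ : V) = v₂) {s : List V} (hs : s ∈ walksTo adj v₁) :
    s.map e.extendSubtype ∈ walksTo adj v₂ := by
  rw [mem_walksTo hacyc] at hs ⊢
  have hreach := mem_reach_of_isChain hs
  have hmap : (s ++ [v₁]).map e.extendSubtype = s.map e.extendSubtype ++ [v₂] := by
    simp [e.extendSubtype_apply_of_mem v₁ ReflTransGen.refl, hroot]
  rw [← hmap, List.isChain_map]
  refine hs.imp_of_mem_imp fun a b ha hb hab => ?_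
  rw [e.extendSubtype_apply_of_mem a (hreach a ha), e.extendSubtype_apply_of_mem b (hreach b hb)]
  exact hadj ⟨b, hreach b hb⟩ ⟨a, hreach a ha⟩ hab

lemma sum_walksTo_eq_of_iso (hacyc : ∀ x : V, ¬ TransGen adj x x)
    (e : reach adj v₁ ≃ reach adj v₂) (hadj : ∀ a b : reach adj v₁, adj a b ↔ adj (e a) (e b))
    (hroot : (e ⟨v₁, ReflTransGen.refl⟩ : V) = v₂)
    (hdeg : ∀ a : reach adj v₁, indeg adj (e a) = indeg adj a) :
    ∑ s ∈ walksTo adj v₁, indegWeight adj s = ∑ s ∈ walksTo adj v₂, indegWeight adj s := by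
  have hreach {v : V} {s : List V} (hs : s ∈ walksTo adj v) : ∀ x ∈ s, x ∈ reach adj v :=
    fun x hx => mem_reach_of_isChain ((mem_walksTo hacyc).1 hs) x (List.mem_append_left _ hx)
  have hadj_symm (a b : reach adj v₂) (h : adj a b) : adj (e.symm a) (e.symm b) :=
    (hadj (e.symm a) (e.symm b)).2 (by simpa using h)
  have hroot_symm : (e.symm ⟨v₂, ReflTransGen.refl⟩ : V) = v₁ := by
    rw [e.symm_apply_eq.2 (Subtype.ext hroot.symm)]
  refine sum_nbij' (List.map e.extendSubtype) (List.map e.symm.extendSubtype)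
    (fun _ => map_mem_walksTo hacyc e (fun a b => (hadj a b).1) hroot)
    (fun _ => map_mem_walksTo hacyc e.symm hadj_symm hroot_symm) (fun s hs => ?_)
    (fun s hs => ?_) (fun s hs => ?_)
  · rw [List.map_map]
    exact (List.map_congr_left fun x hx =>
      e.extendSubtype_symm_extendSubtype_apply (hreach hs x hx)).trans (List.map_id s)
  · rw [List.map_map]
    exact (List.map_congr_left fun x hx => by
      simpa using e.symm.extendSubtype_symm_extendSubtype_apply (hreach hs x hx)).trans
      (List.map_id s)
  · refine (indegWeight_map adj fun x hx => ?_).symm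
    rw [e.extendSubtype_apply_of_mem x (hreach hs x hx)]
    exact hdeg _

end Transport

end BackwardWalk

open BackwardWalk

theorem stmt5_general {V : Type} [Fintype V] (adj : V → V → Prop)
    (hacyc : ∀ x : V, ¬ Relation.TransGen adj x x)
    (v₁ v₂ : V)
    (e : reach adj v₁ ≃ reach adj v₂)
    (hadj : ∀ a b : reach adj v₁, adj a.1 b.1 ↔ adj (e a).1 (e b).1)
    (hroot : (e ⟨v₁, Relation.ReflTransGen.refl⟩).1 = v₂)
    (hdeg : ∀ a : reach adj v₁, indeg adj (e a).1 = indeg adj a.1) :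
    visitProb adj v₁ = visitProb adj v₂ := by
  rw [visitProb_eq_sum_walksTo hacyc, visitProb_eq_sum_walksTo hacyc,
    sum_walksTo_eq_of_iso hacyc e hadj hroot hdeg]

/-- If the maximal rooted subgraphs of `v₁` and `v₂` are isomorphic via an
isomorphism mapping `v₁` to `v₂` such that corresponding vertices have the same
in-degree in `G`, then the roots have the same backward-random-walk visit
probability. -/
theorem stmt5 {V : Type} [Fintype V] [Nonempty V] (adj : V → V → Prop)
    (hacyc : ∀ x : V, ¬ Relation.TransGen adj x x)
    (v₁ v₂ : V)
    (e : reach adj v₁ ≃ reach adj v₂)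
    (hadj : ∀ a b : reach adj v₁, adj a.1 b.1 ↔ adj (e a).1 (e b).1)
    (hroot : (e ⟨v₁, Relation.ReflTransGen.refl⟩).1 = v₂)
    (hdeg : ∀ a : reach adj v₁, indeg adj (e a).1 = indeg adj a.1) :
    visitProb adj v₁ = visitProb adj v₂ :=
  stmt5_general adj hacyc v₁ v₂ e hadj hroot hdeg
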